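/- arXiv:0905.4789 — 9 statements merged into one kernel-verified Lean document; each statement's English description precedes it below -/
import Mathlib

section
/- Any downwards-directed sup-commutative pseudo-BCK algebra satisfies the relative cancellation property: for all a, b, c with a ≤ c and b ≤ c, if c→a = c→b and c⤳a = c⤳b, then a = b. -/
universe u

class PseudoBCK (A : Type u) extends PartialOrder A where
  arr : A → A → A
  sarr : A → A → A
  one : A
  ax1  : ∀ x y z : A, arr x y ≤ sarr (arr y z) (arr x z)
  ax1' : ∀ x y z : A, sarr x y ≤ arr (sarr y z) (sarr x z)
  ax2  : ∀ x y : A, x ≤ sarr (arr x y) y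
  ax2' : ∀ x y : A, x ≤ arr (sarr x y) y
  ax4  : ∀ x : A, x ≤ one
  ax6  : ∀ x y : A, x ≤ y ↔ arr x y = one
  ax6' : ∀ x y : A, x ≤ y ↔ sarr x y = one

namespace PseudoBCK

variable {A : Type u} [PseudoBCK A]

/-- `x ∨₁ y = (x → y) ⤳ y`. -/
def sup1 (x y : A) : A := sarr (arr x y) y

/-- `x ∨₂ y = (x ⤳ y) → y`. -/
def sup2 (x y : A) : A := arr (sarr x y) y

end PseudoBCK

namespace PseudoBCK

variable {A : Type u} [PseudoBCK A]

lemma eq_one_of_one_le {e : A} (h : (one : A) ≤ e) : e = one :=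
  le_antisymm (ax4 e) h

lemma arr_anti {u v : A} (h : u ≤ v) (w : A) : arr v w ≤ arr (A := A) u w := by
  have h1 := ax1 u v w
  rw [(ax6 u v).mp h] at h1
  exact (ax6' _ _).mpr (eq_one_of_one_le h1)

lemma sarr_anti {u v : A} (h : u ≤ v) (w : A) : sarr v w ≤ sarr (A := A) u w := by
  have h1 := ax1' u v w
  rw [(ax6' u v).mp h] at h1
  exact (ax6 _ _).mpr (eq_one_of_one_le h1)

lemma sarr_one (e : A) : sarr (one : A) e = e := by
  apply le_antisymm
  · have h := ax2' (one : A) e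
    exact (ax6 _ _).mpr (eq_one_of_one_le h)
  · have h := ax2 e e
    rwa [(ax6 e e).mp le_rfl] at h

lemma arr_one (e : A) : arr (one : A) e = e := by
  apply le_antisymm
  · have h := ax2 (one : A) e
    exact (ax6' _ _).mpr (eq_one_of_one_le h)
  · have h := ax2' e e
    rwa [(ax6' e e).mp le_rfl] at h

lemma exchange2 (x y z : A) : arr x (sarr y z) = sarr y (arr (A := A) x z) := by
  apply le_antisymm
  · calc arr x (sarr y z) ≤ sarr (arr (sarr y z) z) (arr x z) := ax1 x (sarr y z) z
      _ ≤ sarr y (arr x z) := sarr_anti (ax2' y z) _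
  · calc sarr y (arr x z) ≤ arr (sarr (arr x z) z) (sarr y z) := ax1' y (arr x z) z
      _ ≤ arr x (sarr y z) := arr_anti (ax2 x z) _

/-- If `x ≤ a` then `(a → x) ⤳ x = a`, from sup1-commutativity. -/
lemma rep1 (hsup1 : ∀ x y : A, sup1 x y = sup1 y x) {x a : A} (hxa : x ≤ a) :
    sarr (arr a x) x = a := by
  have h := hsup1 a x
  unfold sup1 at h
  rwa [(ax6 x a).mp hxa, sarr_one] at h

/-- If `w ≤ p` then `(p ⤳ w) → w = p`, from sup2-commutativity. -/
lemma rep2 (hsup2 : ∀ x y : A, sup2 x y = sup2 y x) {w p : A} (hwp : w ≤ p) :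
    arr (sarr p w) w = p := by
  have h := hsup2 p w
  unfold sup2 at h
  rwa [(ax6' w p).mp hwp, arr_one] at h

/-- The key computation: if `x ≤ a ≤ c` then `a → x = (c → a) → (c → x)`. -/
lemma key (hsup1 : ∀ x y : A, sup1 x y = sup1 y x)
    (hsup2 : ∀ x y : A, sup2 x y = sup2 y x)
    {x a c : A} (hxa : x ≤ a) (hac : a ≤ c) :
    arr a x = arr (arr c a) (arr (A := A) c x) := by
  have ha : sarr (arr a x) x = a := rep1 hsup1 hxa
  have ht : arr c a = sarr (arr a x) (arr c x) := by
    conv_lhs => rw [← ha]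
    exact exchange2 c (arr a x) x
  have hwp : arr c x ≤ arr (A := A) a x := arr_anti hac x
  have := rep2 hsup2 hwp
  rw [ht]
  exact this.symm

end PseudoBCK

open PseudoBCK

/-- Any downwards-directed sup-commutative pseudo-BCK algebra satisfies the
relative cancellation property. -/
theorem stmt_0 {A : Type u} [PseudoBCK A]
    (hdir : ∀ a b : A, ∃ x : A, x ≤ a ∧ x ≤ b)
    (hsup1 : ∀ x y : A, sup1 x y = sup1 y x)
    (hsup2 : ∀ x y : A, sup2 x y = sup2 y x) :
    ∀ a b c : A, a ≤ c → b ≤ c →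
      arr c a = arr c b → sarr c a = sarr c b → a = b := by
  intro a b c hac hbc h1 _
  obtain ⟨x, hxa, hxb⟩ := hdir a b
  have hpa : arr a x = arr (arr c a) (arr (A := A) c x) := key hsup1 hsup2 hxa hac
  have hpb : arr b x = arr (arr c b) (arr (A := A) c x) := key hsup1 hsup2 hxb hbc
  have hpq : arr a x = arr (A := A) b x := by rw [hpa, hpb, h1]
  calc a = sarr (arr a x) x := (rep1 hsup1 hxa).symm
    _ = sarr (arr b x) x := by rw [hpq]
    _ = b := rep1 hsup1 hxb
end

section
/- Let s be a Bosbach state on a bounded pseudo-BCK algebra A. Then for all x,y ∈ A: (1) s(y→x) = 1 + s(x) − s(y) = s(y⤳x), and s(x) ≤ s(y) whenever x ≤ y; (2) s(x∨₁y) = s(y∨₁x) and s(x∨₂y) = s(y∨₂x); (3) s(x ∨₁ y⁻˜) = s(x⁻˜ ∨₁ y⁻˜) and s(x ∨₂ y˜⁻) = s(x˜⁻ ∨₂ y˜⁻); (4) s(x⁻˜ ∨₁ y) = s(x ∨₁ y⁻˜) and s(x˜⁻ ∨₂ y) = s(x ∨₂ y˜⁻); (5) s(x⁻˜) = s(x)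 = s(x˜⁻); (6) s(x⁻) = 1 − s(x) = s(x˜). -/
universe u

open PseudoBCK

class BoundedPseudoBCK (A : Type u) extends PseudoBCK A where
  zero : A
  zero_le : ∀ x : A, zero ≤ x

namespace BoundedPseudoBCK

variable {A : Type u} [BoundedPseudoBCK A]

/-- `x⁻ = x → 0`. -/
def neg (x : A) : A := arr x zero

/-- `x˜ = x ⤳ 0`. -/
def tneg (x : A) : A := sarr x zero

end BoundedPseudoBCK

open BoundedPseudoBCK

/-- A Bosbach state on a bounded pseudo-BCK algebra. -/
def IsBosbachState (A : Type u) [BoundedPseudoBCK A] (s : A → ℝ) : Prop :=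
  (∀ x : A, s x ∈ Set.Icc (0 : ℝ) 1) ∧
  s (zero : A) = 0 ∧ s (one : A) = 1 ∧
  (∀ x y : A, s x + s (arr x y) = s y + s (arr y x)) ∧
  (∀ x y : A, s x + s (sarr x y) = s y + s (sarr y x))

section Aux

variable {A : Type u} [BoundedPseudoBCK A]

private lemma mono1 {a b : A} (h : a ≤ b) (c : A) : arr b c ≤ arr a c := by
  have h1 : arr a b = one := (ax6 a b).mp h
  have h2 := ax1 a b c
  rw [h1] at h2
  exact (ax6' _ _).mpr (le_antisymm (ax4 _) h2)

private lemma mono2 {a b : A} (h : a ≤ b) (c : A) : sarr b c ≤ sarr a c := by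
  have h1 : sarr a b = one := (ax6' a b).mp h
  have h2 := ax1' a b c
  rw [h1] at h2
  exact (ax6 _ _).mpr (le_antisymm (ax4 _) h2)

private lemma exch {x y z : A} : x ≤ arr y z ↔ y ≤ sarr x z :=
  ⟨fun h => le_trans (ax2 y z) (mono2 h z),
   fun h => le_trans (ax2' x z) (mono1 h z)⟩

private lemma ex1 (x y z : A) : arr x (sarr y z) = sarr y (arr x z) := by
  apply le_antisymm
  · apply exch.mp
    refine le_trans (ax2' y z) ?_
    exact exch.mpr (ax1 x (sarr y z) z)
  · apply exch.mpr
    refine le_trans (ax2 x z) ?_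
    exact exch.mp (ax1' y (arr x z) z)

private lemma ntn_neg (x : A) : neg (tneg (neg x)) = neg x :=
  le_antisymm (mono1 (ax2 x zero) zero) (ax2' (neg x) zero)

private lemma tnt_tneg (x : A) : tneg (neg (tneg x)) = tneg x :=
  le_antisymm (mono2 (ax2' x zero) zero) (ax2 (tneg x) zero)

end Aux

theorem stmt_1 {A : Type u} [BoundedPseudoBCK A] (s : A → ℝ)
    (hs : IsBosbachState A s) :
    ∀ x y : A,
      (x ≤ y → s (arr y x) = 1 + s x - s y ∧ s (sarr y x) = 1 + s x - s y ∧ s x ≤ s y) ∧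
      (s (sup1 x y) = s (sup1 y x) ∧ s (sup2 x y) = s (sup2 y x)) ∧
      (s (sup1 x (tneg (neg y))) = s (sup1 (tneg (neg x)) (tneg (neg y))) ∧
        s (sup2 x (neg (tneg y))) = s (sup2 (neg (tneg x)) (neg (tneg y)))) ∧
      (s (sup1 (tneg (neg x)) y) = s (sup1 x (tneg (neg y))) ∧
        s (sup2 (neg (tneg x)) y) = s (sup2 x (neg (tneg y)))) ∧
      (s (tneg (neg x)) = s x ∧ s (neg (tneg x)) = s x) ∧
      (s (neg x) = 1 - s x ∧ s (tneg x) = 1 - s x) := by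
  obtain ⟨hIcc, h0, h1, harr, hsarr⟩ := hs
  -- basic facts about s on arrows
  have s_le_one : ∀ x : A, s x ≤ 1 := fun x => (hIcc x).2
  have s_one_of_le : ∀ {x y : A}, x ≤ y → s (arr x y) = 1 := by
    intro x y h; rw [(ax6 x y).mp h, h1]
  have s_one_of_le' : ∀ {x y : A}, x ≤ y → s (sarr x y) = 1 := by
    intro x y h; rw [(ax6' x y).mp h, h1]
  have s_arr_le : ∀ {x y : A}, x ≤ y → s (arr y x) = 1 + s x - s y := by
    intro x y h
    have := harr x y
    rw [s_one_of_le h] at this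
    linarith
  have s_sarr_le : ∀ {x y : A}, x ≤ y → s (sarr y x) = 1 + s x - s y := by
    intro x y h
    have := hsarr x y
    rw [s_one_of_le' h] at this
    linarith
  -- (6)
  have s_neg : ∀ x : A, s (neg x) = 1 - s x := by
    intro x
    have := harr x zero
    rw [(ax6 zero x).mp (zero_le x), h0, h1] at this
    show s (arr x zero) = 1 - s x
    linarith
  have s_tneg : ∀ x : A, s (tneg x) = 1 - s x := by
    intro x
    have := hsarr x zero
    rw [(ax6' zero x).mp (zero_le x), h0, h1] at this
    show s (sarr x zero) = 1 - s x
    linarith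
  -- (5)
  have s_tn : ∀ x : A, s (tneg (neg x)) = s x := by
    intro x; rw [s_tneg, s_neg]; ring
  have s_nt : ∀ x : A, s (neg (tneg x)) = s x := by
    intro x; rw [s_neg, s_tneg]; ring
  -- key formulas for sup1 and sup2
  have key1 : ∀ x y : A, s (sup1 x y) = s y + 1 - s (arr x y) := by
    intro x y
    have hy : y ≤ arr x y := exch.mpr (by rw [(ax6' y y).mp le_rfl]; exact ax4 x)
    have h2 := hsarr (arr x y) y
    rw [s_one_of_le' hy] at h2
    show s (sarr (arr x y) y) = s y + 1 - s (arr x y)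
    linarith
  have key1' : ∀ x y : A, s (sup1 x y) = 1 + s x - s (arr y x) := by
    intro x y
    have := harr x y
    rw [key1]
    linarith
  have key2 : ∀ x y : A, s (sup2 x y) = s y + 1 - s (sarr x y) := by
    intro x y
    have hy : y ≤ sarr x y := exch.mp (by rw [(ax6 y y).mp le_rfl]; exact ax4 x)
    have h2 := harr (sarr x y) y
    rw [s_one_of_le hy] at h2
    show s (arr (sarr x y) y) = s y + 1 - s (sarr x y)
    linarith
  have key2' : ∀ x y : A, s (sup2 x y) = 1 + s x - s (sarr y x) := by
    intro x y
    have := hsarr x y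
    rw [key2]
    linarith
  -- arrow identities involving double negations
  have arr_tn : ∀ x y : A, arr x (tneg (neg y)) = sarr (neg y) (neg x) := by
    intro x y
    show arr x (sarr (neg y) zero) = _
    rw [ex1]
    rfl
  have arr_tn' : ∀ x y : A, arr (tneg (neg x)) (tneg (neg y)) = sarr (neg y) (neg x) := by
    intro x y
    rw [arr_tn, ntn_neg]
  have sarr_nt : ∀ x y : A, sarr x (neg (tneg y)) = arr (tneg y) (tneg x) := by
    intro x y
    show sarr x (arr (tneg y) zero) = _
    rw [← ex1]
    rfl
  have sarr_nt' : ∀ x y : A, sarr (neg (tneg x)) (neg (tneg y)) = arr (tneg y) (tneg x) := by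
    intro x y
    rw [sarr_nt, tnt_tneg]
  intro x y
  refine ⟨?_, ⟨?_, ?_⟩, ⟨?_, ?_⟩, ⟨?_, ?_⟩, ⟨s_tn x, s_nt x⟩, s_neg x, s_tneg x⟩
  · intro h
    have h1' := s_arr_le h
    have h2' := s_sarr_le h
    have := s_le_one (arr y x)
    exact ⟨h1', h2', by linarith⟩
  · rw [key1 x y, key1' y x]; have := harr x y; linarith
  · rw [key2 x y, key2' y x]; have := hsarr x y; linarith
  · rw [key1, key1, arr_tn, arr_tn']
  · rw [key2, key2, sarr_nt, sarr_nt']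
  · rw [key1' (tneg (neg x)) y, key1 x (tneg (neg y)), arr_tn, arr_tn x y,
      s_tn, s_tn]
    have := hsarr (neg x) (neg y)
    rw [s_neg, s_neg] at this
    linarith
  · rw [key2' (neg (tneg x)) y, key2 x (neg (tneg y)), sarr_nt, sarr_nt x y,
      s_nt, s_nt]
    have := harr (tneg x) (tneg y)
    rw [s_tneg, s_tneg] at this
    linarith
end

section
/- Let s be a Bosbach state on a bounded pseudo-BCK algebra A. Then for all x,y ∈ A: (1) s(x⁻˜ → y) = s(x → y⁻˜) and s(x˜⁻ ⤳ y) = s(x ⤳ y˜⁻); (2) s(x → y⁻˜) = s(y⁻ ⤳ x⁻) = s(x⁻˜ → y⁻˜) = s(x⁻˜ → y) and s(x ⤳ y˜⁻) = s(y˜ → x˜) = s(x˜⁻ ⤳ y˜⁻) = s(x˜⁻ ⤳ y); (3) s(x˜ → y⁻˜) = s(x˜ → y) and s(x⁻ ⤳ y˜⁻) = s(x⁻ ⤳ y). -/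
universe u

open PseudoBCK

open BoundedPseudoBCK

namespace PseudoBCK

variable {A : Type u} [PseudoBCK A]

lemma arr_self' (x : A) : arr x x = one := (ax6 x x).1 le_rfl
lemma sarr_self' (x : A) : sarr x x = one := (ax6' x x).1 le_rfl

lemma one_arr' (x : A) : arr one x = x := by
  apply le_antisymm
  · exact (ax6' _ _).2 (le_antisymm (ax4 _) (ax2 one x))
  · have h := ax2' x x
    rwa [sarr_self'] at h

lemma one_sarr' (x : A) : sarr one x = x := by
  apply le_antisymm
  · exact (ax6 _ _).2 (le_antisymm (ax4 _) (ax2' one x))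
  · have h := ax2 x x
    rwa [arr_self'] at h

lemma arr_antitone_left {x y : A} (h : x ≤ y) (z : A) : arr y z ≤ arr x z := by
  have h1 := ax1 x y z
  rw [(ax6 x y).1 h] at h1
  exact (ax6' _ _).2 (le_antisymm (ax4 _) h1)

lemma sarr_antitone_left {x y : A} (h : x ≤ y) (z : A) : sarr y z ≤ sarr x z := by
  have h1 := ax1' x y z
  rw [(ax6' x y).1 h] at h1
  exact (ax6 _ _).2 (le_antisymm (ax4 _) h1)

lemma exchange (x y z : A) : arr x (sarr y z) = sarr y (arr x z) := by
  apply le_antisymm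
  · exact le_trans (ax1 x (sarr y z) z) (sarr_antitone_left (ax2' y z) _)
  · exact le_trans (ax1' y (arr x z) z) (arr_antitone_left (ax2 x z) _)

end PseudoBCK

namespace BoundedPseudoBCK

variable {A : Type u} [BoundedPseudoBCK A]

lemma arr_tneg (x y : A) : arr x (tneg y) = sarr y (neg x) := exchange x y zero

lemma le_tneg_neg (x : A) : x ≤ tneg (neg x) := ax2 x zero
lemma le_neg_tneg (x : A) : x ≤ neg (tneg x) := ax2' x zero

lemma neg_tneg_neg (x : A) : neg (tneg (neg x)) = neg x :=
  le_antisymm (arr_antitone_left (le_tneg_neg x) zero) (le_neg_tneg (neg x))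

lemma tneg_neg_tneg (x : A) : tneg (neg (tneg x)) = tneg x :=
  le_antisymm (sarr_antitone_left (le_neg_tneg x) zero) (le_tneg_neg (tneg x))

end BoundedPseudoBCK

theorem stmt_2 {A : Type u} [BoundedPseudoBCK A] (s : A → ℝ)
    (hs : IsBosbachState A s) :
    ∀ x y : A,
      (s (arr (tneg (neg x)) y) = s (arr x (tneg (neg y))) ∧
        s (sarr (neg (tneg x)) y) = s (sarr x (neg (tneg y)))) ∧
      (s (arr x (tneg (neg y))) = s (sarr (neg y) (neg x)) ∧
        s (sarr (neg y) (neg x)) = s (arr (tneg (neg x)) (tneg (neg y))) ∧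
        s (arr (tneg (neg x)) (tneg (neg y))) = s (arr (tneg (neg x)) y) ∧
        s (sarr x (neg (tneg y))) = s (arr (tneg y) (tneg x)) ∧
        s (arr (tneg y) (tneg x)) = s (sarr (neg (tneg x)) (neg (tneg y))) ∧
        s (sarr (neg (tneg x)) (neg (tneg y))) = s (sarr (neg (tneg x)) y)) ∧
      (s (arr (tneg x) (tneg (neg y))) = s (arr (tneg x) y) ∧
        s (sarr (neg x) (neg (tneg y))) = s (sarr (neg x) y)) := by
  obtain ⟨-, h0, h1, h4, h5⟩ := hs
  have sn : ∀ a : A, s (neg a) = 1 - s a := by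
    intro a
    have h := h4 zero a
    rw [(ax6 _ _).1 (zero_le a), h0, h1] at h
    show s (arr a zero) = 1 - s a
    linarith
  have st : ∀ a : A, s (tneg a) = 1 - s a := by
    intro a
    have h := h5 zero a
    rw [(ax6' _ _).1 (zero_le a), h0, h1] at h
    show s (sarr a zero) = 1 - s a
    linarith
  have key1 : ∀ a b : A, s (arr (tneg (neg a)) b) = s (sarr (neg b) (neg a)) := by
    intro a b
    have e1 := h4 (tneg (neg a)) b
    rw [arr_tneg b (neg a)] at e1
    have e2 := h5 (neg b) (neg a)
    have t1 := st (neg a); have t2 := sn a; have t3 := sn b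
    linarith
  have key1' : ∀ a b : A, s (sarr (neg (tneg a)) b) = s (arr (tneg b) (tneg a)) := by
    intro a b
    have e1 := h5 (neg (tneg a)) b
    rw [← arr_tneg (tneg a) b] at e1
    have e2 := h4 (tneg b) (tneg a)
    have t1 := sn (tneg a); have t2 := st a; have t3 := st b
    linarith
  have key3 : ∀ a b : A, s (arr (tneg a) (tneg (neg b))) = s (arr (tneg a) b) := by
    intro a b
    rw [arr_tneg (tneg a) (neg b)]
    have e1 := h5 (neg b) (neg (tneg a))
    rw [← arr_tneg b (neg (tneg a)), tneg_neg_tneg a] at e1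
    have e2 := h4 (tneg a) b
    have t1 := sn b; have t2 := sn (tneg a)
    linarith
  have key3' : ∀ a b : A, s (sarr (neg a) (neg (tneg b))) = s (sarr (neg a) b) := by
    intro a b
    rw [← arr_tneg (tneg b) (neg a)]
    have e1 := h4 (tneg b) (tneg (neg a))
    rw [arr_tneg (tneg (neg a)) b, neg_tneg_neg a] at e1
    have e2 := h5 (neg a) b
    have t1 := st b; have t2 := st (neg a)
    linarith
  intro x y
  refine ⟨⟨?_, ?_⟩, ⟨?_, ?_, ?_, ?_, ?_, ?_⟩, ?_, ?_⟩
  · rw [arr_tneg x (neg y)]; exact key1 x y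
  · rw [← arr_tneg (tneg y) x]; exact key1' x y
  · rw [arr_tneg x (neg y)]
  · rw [arr_tneg (tneg (neg x)) (neg y), neg_tneg_neg x]
  · rw [arr_tneg (tneg (neg x)) (neg y), neg_tneg_neg x]; exact (key1 x y).symm
  · rw [← arr_tneg (tneg y) x]
  · rw [← arr_tneg (tneg y) (neg (tneg x)), tneg_neg_tneg x]
  · rw [← arr_tneg (tneg y) (neg (tneg x)), tneg_neg_tneg x]; exact (key1' x y).symm
  · exact key3 x y
  · exact key3' x y
end

section
/- Let A be a bounded pseudo-BCK algebra and s : A → [0,1] a function with s(0) = 0, s(x∨₁y) = s(y∨₁x) and s(x∨₂y) = s(y∨₂x) for all x,y ∈ A. Then the following are equivalent: (a) s is a Bosbach state on A; (b) for all x,y ∈ A, y ≤ x implies s(x→y) = s(x⤳y) = 1 − s(x) + s(y); (c) for all x,y ∈ A, s(x→y) = 1 − s(x∨₁y) + s(y) and s(x⤳y) = 1 − s(x∨₂y) + s(y). -/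
universe u

open PseudoBCK

open BoundedPseudoBCK

section Aux

variable {A : Type u} [PseudoBCK A]

lemma arr_self (x : A) : arr x x = one := (PseudoBCK.ax6 x x).mp le_rfl

lemma sarr_self (x : A) : sarr x x = one := (PseudoBCK.ax6' x x).mp le_rfl

lemma one_sarr (x : A) : sarr one x = x := by
  apply le_antisymm
  · have h1 : (one : A) ≤ arr (sarr one x) x := PseudoBCK.ax2' one x
    have h2 : arr (sarr (one : A) x) x = one := le_antisymm (PseudoBCK.ax4 _) h1
    exact (PseudoBCK.ax6 _ _).mpr h2
  · have := PseudoBCK.ax2 x x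
    rwa [arr_self] at this

lemma one_arr (x : A) : arr one x = x := by
  apply le_antisymm
  · have h1 : (one : A) ≤ sarr (arr one x) x := PseudoBCK.ax2 one x
    have h2 : sarr (arr (one : A) x) x = one := le_antisymm (PseudoBCK.ax4 _) h1
    exact (PseudoBCK.ax6' _ _).mpr h2
  · have := PseudoBCK.ax2' x x
    rwa [sarr_self] at this

lemma arr_antitone {u v : A} (h : u ≤ v) (y : A) : arr v y ≤ arr u y := by
  have h1 : arr u v = one := (PseudoBCK.ax6 u v).mp h
  have h2 := PseudoBCK.ax1 u v y
  rw [h1] at h2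
  exact (PseudoBCK.ax6' _ _).mpr (le_antisymm (PseudoBCK.ax4 _) h2)

lemma sarr_antitone {u v : A} (h : u ≤ v) (y : A) : sarr v y ≤ sarr u y := by
  have h1 : sarr u v = one := (PseudoBCK.ax6' u v).mp h
  have h2 := PseudoBCK.ax1' u v y
  rw [h1] at h2
  exact (PseudoBCK.ax6 _ _).mpr (le_antisymm (PseudoBCK.ax4 _) h2)

lemma le_sarr (z y : A) : y ≤ sarr z y := by
  have := sarr_antitone (PseudoBCK.ax4 z) y
  rwa [one_sarr] at this

lemma le_arr (z y : A) : y ≤ arr z y := by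
  have := arr_antitone (PseudoBCK.ax4 z) y
  rwa [one_arr] at this

lemma le_sup1 (x y : A) : y ≤ sup1 x y := le_sarr _ _

lemma le_sup2 (x y : A) : y ≤ sup2 x y := le_arr _ _

lemma arr_sup1 (x y : A) : arr (sup1 x y) y = arr x y :=
  le_antisymm (arr_antitone (PseudoBCK.ax2 x y) y) (PseudoBCK.ax2' (arr x y) y)

lemma sarr_sup2 (x y : A) : sarr (sup2 x y) y = sarr x y :=
  le_antisymm (sarr_antitone (PseudoBCK.ax2' x y) y) (PseudoBCK.ax2 (sarr x y) y)

lemma sup1_self (x : A) : sup1 x x = x := by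
  unfold sup1; rw [arr_self, one_sarr]

end Aux

theorem stmt_3 {A : Type u} [BoundedPseudoBCK A] (s : A → ℝ)
    (hrange : ∀ x : A, s x ∈ Set.Icc (0 : ℝ) 1)
    (h0 : s (zero : A) = 0)
    (hc1 : ∀ x y : A, s (sup1 x y) = s (sup1 y x))
    (hc2 : ∀ x y : A, s (sup2 x y) = s (sup2 y x)) :
    (IsBosbachState A s ↔
      ∀ x y : A, y ≤ x →
        s (arr x y) = 1 - s x + s y ∧ s (sarr x y) = 1 - s x + s y) ∧
    (IsBosbachState A s ↔
      ∀ x y : A,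
        s (arr x y) = 1 - s (sup1 x y) + s y ∧
        s (sarr x y) = 1 - s (sup2 x y) + s y) := by
  have hab : IsBosbachState A s →
      ∀ x y : A, y ≤ x →
        s (arr x y) = 1 - s x + s y ∧ s (sarr x y) = 1 - s x + s y := by
    rintro ⟨_, _, h1, h4, h5⟩ x y hxy
    have e1 : arr y x = one := (PseudoBCK.ax6 y x).mp hxy
    have e2 : sarr y x = one := (PseudoBCK.ax6' y x).mp hxy
    have f1 := h4 x y
    have f2 := h5 x y
    rw [e1, h1] at f1
    rw [e2, h1] at f2
    constructor <;> linarith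
  have hbc : (∀ x y : A, y ≤ x →
        s (arr x y) = 1 - s x + s y ∧ s (sarr x y) = 1 - s x + s y) →
      ∀ x y : A,
        s (arr x y) = 1 - s (sup1 x y) + s y ∧
        s (sarr x y) = 1 - s (sup2 x y) + s y := by
    intro hb x y
    constructor
    · rw [← arr_sup1 x y]
      exact (hb (sup1 x y) y (le_sup1 x y)).1
    · rw [← sarr_sup2 x y]
      exact (hb (sup2 x y) y (le_sup2 x y)).2
  have hca : (∀ x y : A,
        s (arr x y) = 1 - s (sup1 x y) + s y ∧
        s (sarr x y) = 1 - s (sup2 x y) + s y) →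
      IsBosbachState A s := by
    intro hc
    have hone : s (one : A) = 1 := by
      have := (hc one one).1
      rw [arr_self, sup1_self] at this
      linarith
    refine ⟨hrange, h0, hone, ?_, ?_⟩
    · intro x y
      have e1 := (hc x y).1
      have e2 := (hc y x).1
      have e3 := hc1 x y
      linarith
    · intro x y
      have e1 := (hc x y).2
      have e2 := (hc y x).2
      have e3 := hc2 x y
      linarith
  exact ⟨⟨hab, fun hb => hca (hbc hb)⟩, ⟨fun ha => hbc (hab ha), hca⟩⟩
end

section
/- Every state-morphism on a bounded pseudo-BCK algebra A is a Bosbach state on A. -/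
universe u

open PseudoBCK

open BoundedPseudoBCK

/-- A state-morphism on a bounded pseudo-BCK algebra:
`m (x → y) = m (x ⤳ y) = min (1 - m x + m y) 1`. -/
def IsStateMorphism (A : Type u) [BoundedPseudoBCK A] (m : A → ℝ) : Prop :=
  (∀ x : A, m x ∈ Set.Icc (0 : ℝ) 1) ∧
  m (zero : A) = 0 ∧
  (∀ x y : A, m (arr x y) = min (1 - m x + m y) 1) ∧
  (∀ x y : A, m (sarr x y) = min (1 - m x + m y) 1)

theorem stmt_5 {A : Type u} [BoundedPseudoBCK A] (m : A → ℝ)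
    (hm : IsStateMorphism A m) : IsBosbachState A m := by
  obtain ⟨hIcc, h0, harr, hsarr⟩ := hm
  have hone : m (one : A) = 1 := by
    have : PseudoBCK.arr (zero : A) zero = one :=
      (PseudoBCK.ax6 _ _).mp le_rfl
    rw [← this, harr, h0]; norm_num
  have key : ∀ a b : ℝ, a + min (1 - a + b) 1 = b + min (1 - b + a) 1 := by
    intro a b
    rcases le_total a b with h | h
    · rw [min_eq_right (by linarith), min_eq_left (by linarith)]; ring
    · rw [min_eq_left (by linarith), min_eq_right (by linarith)]; ring
  refine ⟨hIcc, h0, hone, ?_, ?_⟩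
  · intro x y; rw [harr, harr]; exact key _ _
  · intro x y; rw [hsarr, hsarr]; exact key _ _
end

section
/- Let s be a Bosbach state on a bounded pseudo-BCK algebra A. Then for every x ∈ A: s(x⁻˜ → x) = 1 = s(x˜⁻ → x) and s(x⁻˜ ⤳ x) = 1 = s(x˜⁻ ⤳ x). Consequently, both x⁻˜ and x˜⁻ are congruent to x modulo the kernel Ker(s) = {a : s(a) = 1}. -/
universe u

open PseudoBCK

open BoundedPseudoBCK

theorem stmt_8 {A : Type u} [BoundedPseudoBCK A] (s : A → ℝ)
    (hs : IsBosbachState A s) :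
    ∀ x : A,
      (s (arr (tneg (neg x)) x) = 1 ∧ s (arr (neg (tneg x)) x) = 1) ∧
      (s (sarr (tneg (neg x)) x) = 1 ∧ s (sarr (neg (tneg x)) x) = 1) ∧
      (arr x (tneg (neg x)) ∈ {a : A | s a = 1} ∧
        arr (tneg (neg x)) x ∈ {a : A | s a = 1}) ∧
      (arr x (neg (tneg x)) ∈ {a : A | s a = 1} ∧
        arr (neg (tneg x)) x ∈ {a : A | s a = 1}) := by
  obtain ⟨hrange, h0, h1, harr, hsarr⟩ := hs
  intro x
  have hle1 : x ≤ tneg (neg x) := PseudoBCK.ax2 x zero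
  have hle2 : x ≤ neg (tneg x) := PseudoBCK.ax2' x zero
  have e1 : arr x (tneg (neg x)) = one := (PseudoBCK.ax6 _ _).mp hle1
  have e1' : sarr x (tneg (neg x)) = one := (PseudoBCK.ax6' _ _).mp hle1
  have e2 : arr x (neg (tneg x)) = one := (PseudoBCK.ax6 _ _).mp hle2
  have e2' : sarr x (neg (tneg x)) = one := (PseudoBCK.ax6' _ _).mp hle2
  have sneg : ∀ y : A, s (neg y) = 1 - s y := by
    intro y
    have h := harr y zero
    have hz : arr (zero : A) y = one := (PseudoBCK.ax6 _ _).mp (BoundedPseudoBCK.zero_le y)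
    rw [hz, h0, h1] at h
    unfold neg; linarith
  have stneg : ∀ y : A, s (tneg y) = 1 - s y := by
    intro y
    have h := hsarr y zero
    have hz : sarr (zero : A) y = one := (PseudoBCK.ax6' _ _).mp (BoundedPseudoBCK.zero_le y)
    rw [hz, h0, h1] at h
    unfold tneg; linarith
  have v1 : s (tneg (neg x)) = s x := by rw [stneg, sneg]; ring
  have v2 : s (neg (tneg x)) = s x := by rw [sneg, stneg]; ring
  have a1 : s (arr (tneg (neg x)) x) = 1 := by
    have h := harr x (tneg (neg x)); rw [e1, h1, v1] at h; linarith
  have a2 : s (arr (neg (tneg x)) x) = 1 := by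
    have h := harr x (neg (tneg x)); rw [e2, h1, v2] at h; linarith
  have b1 : s (sarr (tneg (neg x)) x) = 1 := by
    have h := hsarr x (tneg (neg x)); rw [e1', h1, v1] at h; linarith
  have b2 : s (sarr (neg (tneg x)) x) = 1 := by
    have h := hsarr x (neg (tneg x)); rw [e2', h1, v2] at h; linarith
  exact ⟨⟨a1, a2⟩, ⟨b1, b2⟩,
    ⟨show s _ = 1 by rw [e1]; exact h1, a1⟩,
    ⟨show s _ = 1 by rw [e2]; exact h1, a2⟩⟩
end

section
/- Let A be a bounded pseudo-BCK algebra and m₁, m₂ two state-morphisms on A such that Ker(m₁) = Ker(m₂), where Ker(mᵢ) = {a ∈ A : mᵢ(a) = 1}. Then m₁ = m₂. -/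
universe u

open PseudoBCK

open BoundedPseudoBCK

section Aux

variable {A : Type u} [BoundedPseudoBCK A]

lemma neg_val {m : A → ℝ} (h : IsStateMorphism A m) (a : A) :
    m (neg a) = 1 - m a := by
  obtain ⟨hIcc, h0, harr, _⟩ := h
  have := (hIcc a).1
  simp [neg, harr, h0]
  linarith

lemma double_val {m : A → ℝ} (h : IsStateMorphism A m) (a : A) :
    m (arr (neg a) a) = min (2 * m a) 1 := by
  have := h.2.2.1 (neg a) a
  rw [neg_val h] at this
  rw [this]; ring_nf

lemma gel_val {m : A → ℝ} (h : IsStateMorphism A m) (a : A) :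
    m (neg (arr a (neg a))) = max (2 * m a - 1) 0 := by
  have h1 := h.2.2.1 a (neg a)
  rw [neg_val h] at h1
  rw [neg_val h, h1]
  rcases le_total (1 - m a + (1 - m a)) 1 with hle | hle
  · rw [min_eq_left hle, max_eq_left (by linarith)]; ring
  · rw [min_eq_right hle, max_eq_right (by linarith)]; ring

lemma sep (m₁ m₂ : A → ℝ) (h₁ : IsStateMorphism A m₁) (h₂ : IsStateMorphism A m₂) :
    ∀ n : ℕ, ∀ a : A, m₁ a < m₂ a → 1 < 2 ^ n * (m₂ a - m₁ a) →
      ∃ c : A, m₂ c = 1 ∧ m₁ c < 1 := by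
  intro n
  induction n with
  | zero =>
    intro a hlt hbig
    have := (h₁.1 a).1
    have := (h₂.1 a).2
    simp at hbig; linarith
  | succ n ih =>
    intro a hlt hbig
    rcases le_or_gt (1/2 : ℝ) (m₁ a) with hs | hs
    · -- both ≥ 1/2, use gel
      refine ih (neg (arr a (neg a))) ?_ ?_
      · rw [gel_val h₁, gel_val h₂]
        rw [max_eq_left (by linarith), max_eq_left (by linarith)]
        linarith
      · rw [gel_val h₁, gel_val h₂]
        rw [max_eq_left (by linarith), max_eq_left (by linarith)]
        have : (2:ℝ)^(n+1) = 2^n * 2 := by ring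
        nlinarith [pow_pos (by norm_num : (0:ℝ) < 2) n]
    · rcases le_or_gt (1/2 : ℝ) (m₂ a) with ht | ht
      · -- straddle: double sends m₂ to 1, m₁ below 1
        refine ⟨arr (neg a) a, ?_, ?_⟩
        · rw [double_val h₂, min_eq_right (by linarith)]
        · rw [double_val h₁]
          calc min (2 * m₁ a) 1 ≤ 2 * m₁ a := min_le_left _ _
            _ < 1 := by linarith
      · -- both < 1/2, double
        refine ih (arr (neg a) a) ?_ ?_
        · rw [double_val h₁, double_val h₂,
            min_eq_left (by linarith), min_eq_left (by linarith)]
          linarith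
        · rw [double_val h₁, double_val h₂,
            min_eq_left (by linarith), min_eq_left (by linarith)]
          have : (2:ℝ)^(n+1) = 2^n * 2 := by ring
          nlinarith [pow_pos (by norm_num : (0:ℝ) < 2) n]

lemma eq_of_ker (m₁ m₂ : A → ℝ) (h₁ : IsStateMorphism A m₁) (h₂ : IsStateMorphism A m₂)
    (hker : ∀ c : A, m₂ c = 1 → m₁ c = 1) (a : A) : ¬ m₁ a < m₂ a := by
  intro hlt
  have hd : (0:ℝ) < m₂ a - m₁ a := by linarith
  obtain ⟨n, hn⟩ := pow_unbounded_of_one_lt ((m₂ a - m₁ a)⁻¹) (by norm_num : (1:ℝ) < 2)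
  have hbig : 1 < 2 ^ n * (m₂ a - m₁ a) := by
    rw [← inv_lt_iff_one_lt_mul₀ hd] at *
    exact hn
  obtain ⟨c, hc2, hc1⟩ := sep m₁ m₂ h₁ h₂ n a hlt hbig
  exact absurd (hker c hc2) (ne_of_lt hc1)

end Aux

theorem stmt_11 {A : Type u} [BoundedPseudoBCK A] (m₁ m₂ : A → ℝ)
    (h₁ : IsStateMorphism A m₁) (h₂ : IsStateMorphism A m₂)
    (hker : {a : A | m₁ a = 1} = {a : A | m₂ a = 1}) : m₁ = m₂ := by
  funext a
  have hk1 : ∀ c : A, m₂ c = 1 → m₁ c = 1 := fun c hc => by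
    have : c ∈ {a : A | m₂ a = 1} := hc
    rw [← hker] at this; exact this
  have hk2 : ∀ c : A, m₁ c = 1 → m₂ c = 1 := fun c hc => by
    have : c ∈ {a : A | m₁ a = 1} := hc
    rw [hker] at this; exact this
  have h1 := eq_of_ker m₁ m₂ h₁ h₂ hk1 a
  have h2 := eq_of_ker m₂ m₁ h₂ h₁ hk2 a
  linarith [lt_or_gt_of_ne (a := m₁ a) (b := m₂ a)]
end

section
/- Let m be a measure on a pseudo-BCK algebra A. Then for all x,y ∈ A: (1) m(1) = 0; (2) m(x) ≥ m(y) whenever x ≤ y; (3) m(x∨₁y) = m(y∨₁x) and m(x∨₂y) = m(y∨₂x); (4) m(x∨₁y) = m(x∨₂y); (5) m(x→y) = m(x⤳y). -/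
universe u

open PseudoBCK

/-- A measure on a pseudo-BCK algebra: a nonnegative map with
`m (x → y) = m (x ⤳ y) = m y - m x` whenever `y ≤ x`. -/
def IsMeasure (A : Type u) [PseudoBCK A] (m : A → ℝ) : Prop :=
  (∀ x : A, 0 ≤ m x) ∧
  ∀ x y : A, y ≤ x → m (arr x y) = m y - m x ∧ m (sarr x y) = m y - m x

theorem stmt_13 {A : Type u} [PseudoBCK A] (m : A → ℝ)
    (hm : IsMeasure A m) :
    m (one : A) = 0 ∧
    (∀ x y : A, x ≤ y → m y ≤ m x) ∧
    (∀ x y : A, m (sup1 x y) = m (sup1 y x) ∧ m (sup2 x y) = m (sup2 y x)) ∧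
    (∀ x y : A, m (sup1 x y) = m (sup2 x y)) ∧
    (∀ x y : A, m (arr x y) = m (sarr x y)) := by

  obtain ⟨hpos, hms⟩ := hm
  have harr_one : ∀ x y : A, x ≤ y → arr x y = one := fun x y h => (ax6 x y).mp h
  have hsarr_one : ∀ x y : A, x ≤ y → sarr x y = one := fun x y h => (ax6' x y).mp h
  have h1 : m (one : A) = 0 := by
    have h := (hms (one : A) one le_rfl).1
    rw [harr_one _ _ le_rfl] at h; linarith
  have arr_anti : ∀ a b c : A, a ≤ b → arr b c ≤ arr a c := by
    intro a b c h
    have h1 := ax1 a b c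
    rw [harr_one _ _ h] at h1
    exact (ax6' _ _).mpr (le_antisymm (ax4 _) h1)
  have sarr_anti : ∀ a b c : A, a ≤ b → sarr b c ≤ sarr a c := by
    intro a b c h
    have h1 := ax1' a b c
    rw [hsarr_one _ _ h] at h1
    exact (ax6 _ _).mpr (le_antisymm (ax4 _) h1)
  have le_arr : ∀ x y : A, y ≤ arr x y := by
    intro x y
    have h1 : y ≤ arr one y := by
      have h := ax2' y y; rwa [hsarr_one _ _ le_rfl] at h
    exact h1.trans (arr_anti _ _ _ (ax4 x))
  have le_sarr : ∀ x y : A, y ≤ sarr x y := by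
    intro x y
    have h1 : y ≤ sarr one y := by
      have h := ax2 y y; rwa [harr_one _ _ le_rfl] at h
    exact h1.trans (sarr_anti _ _ _ (ax4 x))
  have hmono : ∀ x y : A, x ≤ y → m y ≤ m x := by
    intro x y h
    linarith [(hms y x h).1, hpos (arr y x)]
  have hm1 : ∀ x y : A, m (sup1 x y) = m y - m (arr x y) :=
    fun x y => (hms (arr x y) y (le_arr x y)).2
  have hm2 : ∀ x y : A, m (sup2 x y) = m y - m (sarr x y) :=
    fun x y => (hms (sarr x y) y (le_sarr x y)).1
  have id1 : ∀ x y : A, arr (sup1 x y) y = arr x y :=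
    fun x y => le_antisymm (arr_anti _ _ _ (ax2 x y)) (ax2' (arr x y) y)
  have id2 : ∀ x y : A, sarr (sup2 x y) y = sarr x y :=
    fun x y => le_antisymm (sarr_anti _ _ _ (ax2' x y)) (ax2 (sarr x y) y)
  have h5 : ∀ x y : A, m (arr x y) = m (sarr x y) := by
    intro x y
    have hy1 : y ≤ sup1 x y := le_sarr _ _
    have hy2 : y ≤ sup2 x y := le_arr _ _
    have e1 : m (sarr (sup1 x y) y) = m (arr x y) := by
      rw [(hms (sup1 x y) y hy1).2, ← (hms (sup1 x y) y hy1).1, id1]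
    have e2 : m (arr (sup2 x y) y) = m (sarr x y) := by
      rw [(hms (sup2 x y) y hy2).1, ← (hms (sup2 x y) y hy2).2, id2]
    have le1 : m (sarr x y) ≤ m (sarr (sup1 x y) y) :=
      hmono _ _ (sarr_anti _ _ _ (ax2 x y))
    have le2 : m (arr x y) ≤ m (arr (sup2 x y) y) :=
      hmono _ _ (arr_anti _ _ _ (ax2' x y))
    linarith
  have key1 : ∀ a b : A, m (arr b a) ≤ m a - m (sup1 a b) := by
    intro a b
    have hb : b ≤ sup1 a b := le_sarr _ _
    have h := hmono _ _ (arr_anti _ _ _ hb : arr (sup1 a b) a ≤ arr b a)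
    have e := (hms (sup1 a b) a (ax2 a b)).1
    linarith
  have key2 : ∀ a b : A, m (sarr b a) ≤ m a - m (sup2 a b) := by
    intro a b
    have hb : b ≤ sup2 a b := le_arr _ _
    have h := hmono _ _ (sarr_anti _ _ _ hb : sarr (sup2 a b) a ≤ sarr b a)
    have e := (hms (sup2 a b) a (ax2' a b)).2
    linarith
  refine ⟨h1, hmono, ?_, ?_, h5⟩
  · intro x y
    constructor
    · have k1 := key1 x y
      have k2 := key1 y x
      have := hm1 x y
      have := hm1 y x
      linarith
    · have k1 := key2 x y
      have k2 := key2 y x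
      have := hm2 x y
      have := hm2 y x
      linarith
  · intro x y
    rw [hm1, hm2, h5]
end

section
/- Let u be a strong unit of a pseudo-BCK algebra A and let m be a measure on A. Then m vanishes identically on A if and only if m(u) = 0. -/
universe u

open PseudoBCK

/-- Iterated implication: `u →⁰ x = x`, `u →ⁿ⁺¹ x = u → (u →ⁿ x)`. -/
def arrIter {A : Type u} [PseudoBCK A] (u : A) : ℕ → A → A
  | 0, x => x
  | n + 1, x => arr u (arrIter u n x)

theorem stmt_18 {A : Type u} [PseudoBCK A] (u : A)
    (hu : ∀ a : A, ∃ n : ℕ, 1 ≤ n ∧ arrIter u n a = (one : A))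
    (m : A → ℝ) (hm : IsMeasure A m) :
    (∀ x : A, m x = 0) ↔ m u = 0 := by
  constructor
  · intro h; exact h u
  · intro hu0 a
    -- basic algebra lemmas
    have sarr_anti : ∀ x y z : A, x ≤ y → sarr y z ≤ sarr x z := by
      intro x y z hxy
      have h1 : sarr x y = one := (ax6' x y).mp hxy
      have h2 : sarr x y ≤ arr (sarr y z) (sarr x z) := ax1' x y z
      rw [h1] at h2
      have h3 : arr (sarr y z) (sarr x z) = one :=
        le_antisymm (ax4 _) h2
      exact (ax6 _ _).mpr h3
    have arr_anti : ∀ x y z : A, x ≤ y → arr y z ≤ arr x z := by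
      intro x y z hxy
      have h1 : arr x y = one := (ax6 x y).mp hxy
      have h2 : arr x y ≤ sarr (arr y z) (arr x z) := ax1 x y z
      rw [h1] at h2
      have h3 : sarr (arr y z) (arr x z) = one :=
        le_antisymm (ax4 _) h2
      exact (ax6' _ _).mpr h3
    have le_sarr : ∀ c y : A, y ≤ sarr c y := by
      intro c y
      have h1 : y ≤ sarr (arr y y) y := ax2 y y
      rw [(ax6 y y).mp le_rfl] at h1
      exact le_trans h1 (sarr_anti c one y (ax4 c))
    -- measure lemmas
    have m_anti : ∀ x y : A, y ≤ x → m x ≤ m y := by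
      intro x y hyx
      have h1 := (hm.2 x y hyx).1
      have h2 := hm.1 (arr x y)
      linarith
    have m_one : m (one : A) = 0 := by
      have h1 := (hm.2 one one le_rfl).1
      rw [(ax6 (one : A) one).mp le_rfl] at h1
      linarith
    -- key step: m (arr u b) ≥ m b - m u
    have step : ∀ b : A, m b - m u ≤ m (arr u b) := by
      intro b
      set s : A := sarr (arr u b) b with hs
      have hb : b ≤ s := le_sarr _ b
      have hus : u ≤ s := ax2 u b
      have h1 : m (arr s b) = m b - m s := (hm.2 s b hb).1
      have h2 : arr u b ≤ arr s b := ax2' (arr u b) b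
      have h3 : m (arr s b) ≤ m (arr u b) := m_anti _ _ h2
      have h4 : m s ≤ m u := m_anti _ _ hus
      linarith
    -- iterate
    have iter : ∀ n : ℕ, m a ≤ m (arrIter u n a) := by
      intro n
      induction n with
      | zero => simp [arrIter]
      | succ k ih =>
        have := step (arrIter u k a)
        rw [hu0] at this
        simp only [arrIter]
        linarith
    obtain ⟨n, _, hn⟩ := hu a
    have h1 := iter n
    rw [hn, m_one] at h1
    have h2 := hm.1 a
    linarith
end
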